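/- Let P be a finite set and Q a finite set of quartets over P, and suppose there is a linear order ≤ on P satisfying every quartet of Q. Then there is a linear order ≤' on the vertex set of G(P,Q) such that every prefix cut (A,B) of ≤' satisfies Omim_{G(P,Q)}(A,B) ≤ 1. -/

import Mathlib

open SimpleGraph

/-- An induced matching of `G`: a set of edges of `G` that pairwise share no endpoint and
such that no edge of `G` joins an endpoint of one edge of the set to an endpoint of a
different edge of the set. -/
def IsInducedMatching {V : Type} (G : SimpleGraph V) (M : Set (Sym2 V)) : Prop :=
  M ⊆ G.edgeSet ∧
    ∀ e ∈ M, ∀ f ∈ M, e ≠ f → ∀ x ∈ e, ∀ y ∈ f, x ≠ y ∧ ¬ G.Adj x y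

/-- The bipartite graph `G[A, Aᶜ]` consisting of the edges of `G` crossing the cut `(A, Aᶜ)`. -/
def cutGraph {V : Type} (G : SimpleGraph V) (A : Set V) : SimpleGraph V where
  Adj x y := G.Adj x y ∧ ((x ∈ A ∧ y ∉ A) ∨ (x ∉ A ∧ y ∈ A))
  symm := by
    constructor
    rintro x y ⟨h, h'⟩
    exact ⟨h.symm, by tauto⟩
  loopless := by
    constructor
    rintro x ⟨h, -⟩
    exact G.loopless.irrefl x h

/-- The graph `G − E[Xᶜ]`, obtained from `G` by deleting all edges with both endpoints
outside of `X`. -/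
def delOutside {V : Type} (G : SimpleGraph V) (X : Set V) : SimpleGraph V where
  Adj x y := G.Adj x y ∧ (x ∈ X ∨ y ∈ X)
  symm := by
    constructor
    rintro x y ⟨h, h'⟩
    exact ⟨h.symm, h'.symm⟩
  loopless := by
    constructor
    rintro x ⟨h, -⟩
    exact G.loopless.irrefl x h

/-- The mim-value of the cut `(A, Aᶜ)`: the maximum size of an induced matching of `G[A, Aᶜ]`. -/
noncomputable def mimValue {V : Type} (G : SimpleGraph V) (A : Set V) : ℕ :=
  sSup {n | ∃ M : Set (Sym2 V), IsInducedMatching (cutGraph G A) M ∧ M.ncard = n}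

/-- The sim-value of the cut `(A, Aᶜ)`: the maximum size of a set of crossing edges of `G`
that is an induced matching of `G`. -/
noncomputable def simValue {V : Type} (G : SimpleGraph V) (A : Set V) : ℕ :=
  sSup {n | ∃ M : Set (Sym2 V), M ⊆ (cutGraph G A).edgeSet ∧
    IsInducedMatching G M ∧ M.ncard = n}

/-- The upper-induced matching number of `X`: the maximum size of a set of crossing edges of
`G` that is an induced matching of `G − E[Xᶜ]`. -/
noncomputable def upperIMN {V : Type} (G : SimpleGraph V) (X : Set V) : ℕ :=
  sSup {n | ∃ M : Set (Sym2 V), M ⊆ (cutGraph G X).edgeSet ∧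
    IsInducedMatching (delOutside G X) M ∧ M.ncard = n}

/-- The omim-value of the cut `(A, Aᶜ)`. -/
noncomputable def omimValue {V : Type} (G : SimpleGraph V) (A : Set V) : ℕ :=
  min (upperIMN G A) (upperIMN G Aᶜ)

/-- The Omim-value of the cut `(A, Aᶜ)`. -/
noncomputable def bigOmimValue {V : Type} (G : SimpleGraph V) (A : Set V) : ℕ :=
  max (upperIMN G A) (upperIMN G Aᶜ)

/-- A branch decomposition over a vertex set `V`: a finite ternary tree (every vertex has
degree 1 or 3) together with a bijection from `V` to its set of leaves. -/
structure BranchDecomp (V : Type) : Type 1 where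
  τ : Type
  tree : SimpleGraph τ
  finite : Finite τ
  isTree : tree.IsTree
  ternary : ∀ t : τ, (tree.neighborSet t).ncard = 1 ∨ (tree.neighborSet t).ncard = 3
  toLeaf : V → τ
  leafBij : Set.BijOn toLeaf Set.univ {t | (tree.neighborSet t).ncard = 1}

/-- The side of the cut induced by the tree edge `xy` that contains the endpoint `x`:
the set of vertices of `V` whose leaf lies in the component of `T − xy` containing `x`. -/
def BranchDecomp.side {V : Type} (D : BranchDecomp V) (x y : D.τ) : Set V :=
  {v | (D.tree.deleteEdges {s(x, y)}).Reachable (D.toLeaf v) x}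

/-- The width of a branch decomposition with respect to a cut-value function `val`:
the maximum of `val` over all cuts induced by edges of the tree. -/
noncomputable def BranchDecomp.width {V : Type} (D : BranchDecomp V) (val : Set V → ℕ) : ℕ :=
  sSup {n | ∃ x y : D.τ, D.tree.Adj x y ∧ n = val (D.side x y)}

/-- A branch decomposition is a caterpillar if its internal (degree-3) vertices induce a path. -/
def BranchDecomp.IsCaterpillar {V : Type} (D : BranchDecomp V) : Prop :=
  ∃ n : ℕ, Nonempty
    ((D.tree.induce {t | (D.tree.neighborSet t).ncard = 3}) ≃g SimpleGraph.pathGraph n)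

noncomputable def mimWidth {V : Type} (G : SimpleGraph V) : ℕ :=
  sInf {n | ∃ D : BranchDecomp V, D.width (mimValue G) = n}

noncomputable def simWidth {V : Type} (G : SimpleGraph V) : ℕ :=
  sInf {n | ∃ D : BranchDecomp V, D.width (simValue G) = n}

noncomputable def omimWidth {V : Type} (G : SimpleGraph V) : ℕ :=
  sInf {n | ∃ D : BranchDecomp V, D.width (omimValue G) = n}

noncomputable def bigOmimWidth {V : Type} (G : SimpleGraph V) : ℕ :=
  sInf {n | ∃ D : BranchDecomp V, D.width (bigOmimValue G) = n}

noncomputable def linMimWidth {V : Type} (G : SimpleGraph V) : ℕ :=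
  sInf {n | ∃ D : BranchDecomp V, D.IsCaterpillar ∧ D.width (mimValue G) = n}

noncomputable def linSimWidth {V : Type} (G : SimpleGraph V) : ℕ :=
  sInf {n | ∃ D : BranchDecomp V, D.IsCaterpillar ∧ D.width (simValue G) = n}

noncomputable def linOmimWidth {V : Type} (G : SimpleGraph V) : ℕ :=
  sInf {n | ∃ D : BranchDecomp V, D.IsCaterpillar ∧ D.width (omimValue G) = n}

noncomputable def linBigOmimWidth {V : Type} (G : SimpleGraph V) : ℕ :=
  sInf {n | ∃ D : BranchDecomp V, D.IsCaterpillar ∧ D.width (bigOmimValue G) = n}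

/-- A quartet `[ab|cd]` over `P`: four pairwise distinct elements of `P`, partitioned into
the two unordered pairs `{a, b}` and `{c, d}`. -/
structure Quartet (P : Type) where
  a : P
  b : P
  c : P
  d : P
  hab : a ≠ b
  hac : a ≠ c
  had : a ≠ d
  hbc : b ≠ c
  hbd : b ≠ d
  hcd : c ≠ d

/-- The four elements of a quartet, indexed by `Fin 4`. -/
def Quartet.elem {P : Type} (q : Quartet P) : Fin 4 → P := ![q.a, q.b, q.c, q.d]

/-- Whether two indices in `Fin 4` correspond to the same side (pair) of a quartet. -/
def sameSide (i j : Fin 4) : Prop := (i.val < 2 ∧ j.val < 2) ∨ (2 ≤ i.val ∧ 2 ≤ j.val)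

/-- A ternary tree with leaves labeled by `P` satisfies the quartet `[ab|cd]` if some edge of
the tree separates the leaves labeled `a, b` from the leaves labeled `c, d`. -/
def BranchDecomp.Satisfies {P : Type} (D : BranchDecomp P) (q : Quartet P) : Prop :=
  ∃ x y : D.τ, D.tree.Adj x y ∧
    q.a ∈ D.side x y ∧ q.b ∈ D.side x y ∧ q.c ∉ D.side x y ∧ q.d ∉ D.side x y

/-- A linear order `le` on `P` satisfies the quartet `[ab|cd]` if both `a` and `b` are
smaller than both `c` and `d`, or both `c` and `d` are smaller than both `a` and `b`. -/
def OrdSatisfies {P : Type} (le : P → P → Prop) (q : Quartet P) : Prop :=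
  (le q.a q.c ∧ le q.a q.d ∧ le q.b q.c ∧ le q.b q.d) ∨
  (le q.c q.a ∧ le q.d q.a ∧ le q.c q.b ∧ le q.d q.b)

/-- The vertices of the graph `G(P, Q)`: the points of `P` together with the vertices
`u_x^q` for `q ∈ Q` and `x` one of the four elements of `q` (indexed by `Fin 4`). -/
inductive QVert (P : Type) (Q : Finset (Quartet P)) : Type
  | pt (p : P)
  | u (q : {q : Quartet P // q ∈ Q}) (i : Fin 4)

/-- Base relation generating the edges of `G(P, Q)`. -/
def qRel {P : Type} {Q : Finset (Quartet P)} : QVert P Q → QVert P Q → Prop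
  | QVert.pt p, QVert.u q i => p = q.1.elem i
  | QVert.u q i, QVert.u q' j => q = q' → sameSide i j
  | _, _ => False

/-- The graph `G(P, Q)` of the sim-width/omim-width/Omim-width reduction. -/
def quartetGraph (P : Type) (Q : Finset (Quartet P)) : SimpleGraph (QVert P Q) :=
  SimpleGraph.fromRel qRel

/-- The vertices of the graph `G'(P, Q)`: the points of `P`, the vertices `u_x^q`, and the
vertices `γ_x^q`. -/
inductive GpVert (P : Type) (Q : Finset (Quartet P)) : Type
  | pt (p : P)
  | u (q : {q : Quartet P // q ∈ Q}) (i : Fin 4)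
  | g (q : {q : Quartet P // q ∈ Q}) (i : Fin 4)

/-- Base relation generating the edges of `G'(P, Q)`. -/
def gpRel {P : Type} {Q : Finset (Quartet P)} : GpVert P Q → GpVert P Q → Prop
  | GpVert.pt p, GpVert.u q i => p = q.1.elem i
  | GpVert.pt p, GpVert.g q i => p = q.1.elem i
  | GpVert.u q i, GpVert.u q' j => q = q' → sameSide i j
  | GpVert.u q _, GpVert.g q' _ => q ≠ q'
  | GpVert.g q _, GpVert.u q' _ => q ≠ q'
  | GpVert.g _ _, GpVert.g _ _ => True
  | _, _ => False

/-- The graph `G'(P, Q)` of the mim-width reduction. -/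
def gpGraph (P : Type) (Q : Finset (Quartet P)) : SimpleGraph (GpVert P Q) :=
  SimpleGraph.fromRel gpRel

/-- Base relation generating the edges of `H(P, Q)`; the extra vertex `ω` is `none`,
adjacent exactly to the vertices of `U`. -/
def hRel {P : Type} {Q : Finset (Quartet P)} :
    Option (GpVert P Q) → Option (GpVert P Q) → Prop
  | some x, some y => gpRel x y
  | none, some (GpVert.u _ _) => True
  | _, _ => False

/-- The graph `H(P, Q)`, obtained from `G'(P, Q)` by adding a vertex `ω` adjacent to all of `U`. -/
def hGraph (P : Type) (Q : Finset (Quartet P)) : SimpleGraph (Option (GpVert P Q)) :=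
  SimpleGraph.fromRel hRel

/-! ### Auxiliary development for Statement 8 -/

section Stmt8Aux

open Classical

noncomputable instance qvertLO (P : Type) (Q : Finset (Quartet P)) :
    LinearOrder (QVert P Q) :=
  IsWellOrder.linearOrder WellOrderingRel

variable {P : Type} {Q : Finset (Quartet P)}

lemma sameSide_iff {i j : Fin 4} : sameSide i j ↔ ((i : ℕ) < 2 ↔ (j : ℕ) < 2) := by
  unfold sameSide; omega

lemma sameSide_symm {i j : Fin 4} (h : sameSide i j) : sameSide j i := by
  rw [sameSide_iff] at h ⊢; tauto

section P_LO
variable [LinearOrder P]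

/-- `qlow q i` holds iff the `i`-th element of `q` is on the lower side of `q`. -/
noncomputable def qlow (q : {q : Quartet P // q ∈ Q}) (i : Fin 4) : Prop :=
  if (i : ℕ) < 2 then q.1.a < q.1.c else q.1.c < q.1.a

private lemma ltne {a c : P} (hac : a ≠ c) : a < c ↔ ¬ c < a :=
  ⟨fun h h' => lt_asymm h h', fun h => hac.lt_or_gt.resolve_right h⟩

lemma qlow_same {q : {q : Quartet P // q ∈ Q}} {i j : Fin 4} (h : sameSide i j) :
    qlow q i ↔ qlow q j := by
  rw [sameSide_iff] at h
  unfold qlow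
  by_cases hi : (i : ℕ) < 2
  · rw [if_pos hi, if_pos (h.1 hi)]
  · rw [if_neg hi, if_neg (fun hj => hi (h.2 hj))]

lemma qlow_opp {q : {q : Quartet P // q ∈ Q}} {i j : Fin 4} (h : ¬ sameSide i j) :
    qlow q i ↔ ¬ qlow q j := by
  rw [sameSide_iff] at h
  unfold qlow
  by_cases hi : (i : ℕ) < 2
  · have hj : ¬ (j : ℕ) < 2 := fun hj => h (iff_of_true hi hj)
    rw [if_pos hi, if_neg hj]
    exact ltne q.1.hac
  · have hj : (j : ℕ) < 2 := by
      by_contra hj; exact h (iff_of_false hi hj)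
    rw [if_neg hi, if_pos hj]
    exact ltne q.1.hac.symm

lemma elem_of_low {q : Quartet P} {i : Fin 4} (h : (i : ℕ) < 2) :
    q.elem i = q.a ∨ q.elem i = q.b := by
  fin_cases i
  · exact Or.inl rfl
  · exact Or.inr rfl
  · simp at h
  · simp at h

lemma elem_of_high {q : Quartet P} {i : Fin 4} (h : ¬ (i : ℕ) < 2) :
    q.elem i = q.c ∨ q.elem i = q.d := by
  fin_cases i
  · simp at h
  · simp at h
  · exact Or.inl rfl
  · exact Or.inr rfl

/-- The elements on the lower side are strictly smaller than those on the upper side. -/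
lemma lower_lt {q : {q : Quartet P // q ∈ Q}}
    (hq : OrdSatisfies (fun a b : P => a ≤ b) q.1) {i j : Fin 4}
    (hi : qlow q i) (hj : ¬ qlow q j) : q.1.elem i < q.1.elem j := by
  rcases hq with ⟨h1, h2, h3, h4⟩ | ⟨h1, h2, h3, h4⟩
  · -- a,b below c,d, so `qlow` means index < 2
    have hac : q.1.a < q.1.c := lt_of_le_of_ne h1 q.1.hac
    have hi2 : (i : ℕ) < 2 := by
      by_contra hcon
      rw [qlow, if_neg hcon] at hi
      exact lt_asymm hac hi
    have hj2 : ¬ (j : ℕ) < 2 := by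
      intro hcon
      rw [qlow, if_pos hcon] at hj
      exact hj hac
    rcases elem_of_low (q := q.1) hi2 with hie | hie <;>
      rcases elem_of_high (q := q.1) hj2 with hje | hje <;> rw [hie, hje]
    · exact hac
    · exact lt_of_le_of_ne h2 q.1.had
    · exact lt_of_le_of_ne h3 q.1.hbc
    · exact lt_of_le_of_ne h4 q.1.hbd
  · -- c,d below a,b, so `qlow` means index ≥ 2
    have hca : q.1.c < q.1.a := lt_of_le_of_ne h1 q.1.hac.symm
    have hi2 : ¬ (i : ℕ) < 2 := by
      intro hcon
      rw [qlow, if_pos hcon] at hi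
      exact lt_asymm hca hi
    have hj2 : (j : ℕ) < 2 := by
      by_contra hcon
      rw [qlow, if_neg hcon] at hj
      exact hj hca
    rcases elem_of_high (q := q.1) hi2 with hie | hie <;>
      rcases elem_of_low (q := q.1) hj2 with hje | hje <;> rw [hie, hje]
    · exact hca
    · exact lt_of_le_of_ne h3 q.1.hbc.symm
    · exact lt_of_le_of_ne h2 q.1.had.symm
    · exact lt_of_le_of_ne h4 q.1.hbd.symm

/-- The base point of a vertex of `G(P,Q)`. -/
def qbp : QVert P Q → P
  | .pt p => p
  | .u q i => q.1.elem i

/-- The slot of a vertex within its block. -/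
noncomputable def qslot : QVert P Q → Fin 3
  | .pt _ => 1
  | .u q i => if qlow q i then 2 else 0

@[simp] lemma qbp_pt {p : P} : qbp (QVert.pt p : QVert P Q) = p := rfl
@[simp] lemma qbp_u {q : {q : Quartet P // q ∈ Q}} {i : Fin 4} :
    qbp (QVert.u q i) = q.1.elem i := rfl

/-- The position key of a vertex, yielding the linear order on `QVert P Q`. -/
noncomputable def fKey (v : QVert P Q) : Lex (P × Lex (Fin 3 × QVert P Q)) :=
  toLex (qbp v, toLex (qslot v, v))

lemma fKey_inj : Function.Injective (fKey (P := P) (Q := Q)) := fun v w h =>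
  congrArg (fun x => (ofLex (ofLex x).2).2) h

lemma fKey_lt_bp {v w : QVert P Q} (h : qbp v < qbp w) : fKey v < fKey w :=
  Prod.Lex.lt_iff.2 (Or.inl h)

lemma fKey_lt_slot {v w : QVert P Q} (hb : qbp v = qbp w) (h : qslot v < qslot w) :
    fKey v < fKey w :=
  Prod.Lex.lt_iff.2 (Or.inr ⟨hb, Prod.Lex.lt_iff.2 (Or.inl h)⟩)

end P_LO

/-! Adjacency facts about `quartetGraph`. -/

lemma qg_not_adj_pt_pt {p p' : P} : ¬ (quartetGraph P Q).Adj (QVert.pt p) (QVert.pt p') := by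
  rintro ⟨-, h | h⟩ <;> exact h

lemma qg_adj_pt_u {p : P} {q : {q : Quartet P // q ∈ Q}} {i : Fin 4} :
    (quartetGraph P Q).Adj (QVert.pt p) (QVert.u q i) ↔ p = q.1.elem i := by
  constructor
  · rintro ⟨-, h | h⟩
    · exact h
    · exact h.elim
  · intro h
    exact ⟨fun hh => (by cases hh), Or.inl h⟩

lemma qg_adj_uu_ne {q q' : {q : Quartet P // q ∈ Q}} {i j : Fin 4} (h : q ≠ q') :
    (quartetGraph P Q).Adj (QVert.u q i) (QVert.u q' j) := by
  refine ⟨fun hh => ?_, Or.inl (fun hq => absurd hq h)⟩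
  injection hh with h1 h2
  exact h h1

lemma qg_adj_uu_same {q : {q : Quartet P // q ∈ Q}} {i j : Fin 4}
    (hij : i ≠ j) (hss : sameSide i j) :
    (quartetGraph P Q).Adj (QVert.u q i) (QVert.u q j) := by
  refine ⟨fun hh => ?_, Or.inl (fun _ => hss)⟩
  injection hh with h1 h2
  exact hij h2

lemma qg_adj_uu_same_elim {q : {q : Quartet P // q ∈ Q}} {i j : Fin 4}
    (h : (quartetGraph P Q).Adj (QVert.u q i) (QVert.u q j)) : i ≠ j ∧ sameSide i j := by
  obtain ⟨hne, hr | hr⟩ := h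
  · exact ⟨fun hij => hne (by rw [hij]), hr rfl⟩
  · exact ⟨fun hij => hne (by rw [hij]), sameSide_symm (hr rfl)⟩

section Main
variable [LinearOrder P]
variable {A : Set (QVert P Q)}

lemma memOfLt (hdc : ∀ x ∈ A, ∀ y, fKey y ≤ fKey x → y ∈ A) {v w : QVert P Q}
    (hw : w ∈ A) (h : fKey v < fKey w) : v ∈ A :=
  hdc w hw v h.le

/-- Shape classification of a crossing edge. -/
lemma edgeShape (hdc : ∀ x ∈ A, ∀ y, fKey y ≤ fKey x → y ∈ A)
    {x₁ x₂ : QVert P Q} (hax : (quartetGraph P Q).Adj x₁ x₂)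
    (h1 : x₁ ∈ A) (h2 : x₂ ∉ A) :
    (∃ p q i, x₁ = QVert.pt p ∧ x₂ = QVert.u q i ∧ p = q.1.elem i ∧ qlow q i) ∨
    (∃ p q i, x₁ = QVert.u q i ∧ x₂ = QVert.pt p ∧ p = q.1.elem i ∧ ¬ qlow q i) ∨
    (∃ q i j, x₁ = QVert.u q i ∧ x₂ = QVert.u q j ∧ i ≠ j ∧ sameSide i j) ∨
    (∃ q q' i j, x₁ = QVert.u q i ∧ x₂ = QVert.u q' j ∧ q ≠ q') := by
  have hlt : fKey x₁ < fKey x₂ := by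
    by_contra hcon
    exact h2 (hdc x₁ h1 x₂ (le_of_not_gt hcon))
  cases x₁ with
  | pt p =>
    cases x₂ with
    | pt p' => exact absurd hax qg_not_adj_pt_pt
    | u q i =>
      have hp : p = q.1.elem i := qg_adj_pt_u.1 hax
      refine Or.inl ⟨p, q, i, rfl, rfl, hp, ?_⟩
      by_contra hl
      have : fKey (QVert.u q i : QVert P Q) < fKey (QVert.pt p) := by
        refine fKey_lt_slot (by rw [qbp_u, qbp_pt, hp]) ?_
        show (if qlow q i then 2 else 0 : Fin 3) < 1
        rw [if_neg hl]; decide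
      exact absurd hlt (lt_asymm this)
  | u q i =>
    cases x₂ with
    | pt p =>
      have hp : p = q.1.elem i := qg_adj_pt_u.1 hax.symm
      refine Or.inr (Or.inl ⟨p, q, i, rfl, rfl, hp, ?_⟩)
      intro hl
      have : fKey (QVert.pt p : QVert P Q) < fKey (QVert.u q i) := by
        refine fKey_lt_slot (by rw [qbp_u, qbp_pt, hp]) ?_
        show (1 : Fin 3) < (if qlow q i then 2 else 0)
        rw [if_pos hl]; decide
      exact absurd hlt (lt_asymm this)
    | u q' j =>
      by_cases hq : q = q'
      · subst hq
        obtain ⟨hij, hss⟩ := qg_adj_uu_same_elim hax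
        exact Or.inr (Or.inr (Or.inl ⟨q, i, j, rfl, rfl, hij, hss⟩))
      · exact Or.inr (Or.inr (Or.inr ⟨q, q', i, j, rfl, rfl, hq⟩))

/-- Helper: a lower-side `u`-vertex outside `A` is incompatible with any
`u`-vertex inside `A` to which it is not adjacent. -/
lemma helperA1 (hsat : ∀ q ∈ Q, OrdSatisfies (fun a b : P => a ≤ b) q)
    (hdc : ∀ x ∈ A, ∀ y, fKey y ≤ fKey x → y ∈ A) {qx qy : {q : Quartet P // q ∈ Q}} {ix iy : Fin 4}
    (hx2 : (QVert.u qx ix : QVert P Q) ∉ A) (hlx : qlow qx ix)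
    (hy1 : (QVert.u qy iy : QVert P Q) ∈ A)
    (k : ¬ (quartetGraph P Q).Adj (QVert.u qx ix) (QVert.u qy iy)) : False := by
  by_cases hq : qx = qy
  · subst hq
    by_cases hss : sameSide ix iy
    · exact k (qg_adj_uu_same (fun h => hx2 (by rw [h]; exact hy1)) hss)
    · have hniy : ¬ qlow qx iy := (qlow_opp hss).1 hlx
      exact hx2 (memOfLt hdc hy1 (fKey_lt_bp (lower_lt (hsat _ qx.2) hlx hniy)))
  · exact k (qg_adj_uu_ne hq)

/-- Helper: a non-lower `u`-vertex inside `A` together with a lower `u`-vertex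
of the same quartet outside `A` is impossible. -/
lemma helperOppA (hsat : ∀ q ∈ Q, OrdSatisfies (fun a b : P => a ≤ b) q)
    (hdc : ∀ x ∈ A, ∀ y, fKey y ≤ fKey x → y ∈ A) {q : {q : Quartet P // q ∈ Q}} {i j : Fin 4}
    (h1 : (QVert.u q i : QVert P Q) ∈ A) (hni : ¬ qlow q i)
    (h2 : (QVert.u q j : QVert P Q) ∉ A) (hj : qlow q j) : False :=
  h2 (memOfLt hdc h1 (fKey_lt_bp (lower_lt (hsat _ q.2) hj hni)))


lemma noTwo (hsat : ∀ q ∈ Q, OrdSatisfies (fun a b : P => a ≤ b) q)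
    (hdc : ∀ x ∈ A, ∀ y, fKey y ≤ fKey x → y ∈ A)
    (X : Set (QVert P Q)) (hX : X = A ∨ X = Aᶜ)
    {x₁ x₂ y₁ y₂ : QVert P Q}
    (hax : (quartetGraph P Q).Adj x₁ x₂) (hay : (quartetGraph P Q).Adj y₁ y₂)
    (hx₁ : x₁ ∈ A) (hx₂ : x₂ ∉ A) (hy₁ : y₁ ∈ A) (hy₂ : y₂ ∉ A)
    (hk : ∀ a b : QVert P Q, (a = x₁ ∨ a = x₂) → (b = y₁ ∨ b = y₂) →
      a ≠ b ∧ ¬ ((quartetGraph P Q).Adj a b ∧ (a ∈ X ∨ b ∈ X))) : False := by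
  have hne11 : x₁ ≠ y₁ := (hk _ _ (Or.inl rfl) (Or.inl rfl)).1
  have hne12 : x₁ ≠ y₂ := (hk _ _ (Or.inl rfl) (Or.inr rfl)).1
  have hne21 : x₂ ≠ y₁ := (hk _ _ (Or.inr rfl) (Or.inl rfl)).1
  have hne22 : x₂ ≠ y₂ := (hk _ _ (Or.inr rfl) (Or.inr rfl)).1
  rcases hX with rfl | rfl
  · -- X = A
    have k11 : ¬ (quartetGraph P Q).Adj x₁ y₁ :=
      fun h => (hk _ _ (Or.inl rfl) (Or.inl rfl)).2 ⟨h, Or.inl hx₁⟩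
    have k12 : ¬ (quartetGraph P Q).Adj x₁ y₂ :=
      fun h => (hk _ _ (Or.inl rfl) (Or.inr rfl)).2 ⟨h, Or.inl hx₁⟩
    have k21 : ¬ (quartetGraph P Q).Adj x₂ y₁ :=
      fun h => (hk _ _ (Or.inr rfl) (Or.inl rfl)).2 ⟨h, Or.inr hy₁⟩
    rcases edgeShape hdc hax hx₁ hx₂ with
        ⟨px, qx, ix, rfl, rfl, hpx, hlx⟩ | ⟨px, qx, ix, rfl, rfl, hpx, hlx⟩ |
        ⟨qx, ix, jx, rfl, rfl, hijx, hssx⟩ | ⟨qx, qx', ix, jx, rfl, rfl, hqx⟩ <;>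
      rcases edgeShape hdc hay hy₁ hy₂ with
        ⟨py, qy, iy, rfl, rfl, hpy, hly⟩ | ⟨py, qy, iy, rfl, rfl, hpy, hly⟩ |
        ⟨qy, iy, jy, rfl, rfl, hijy, hssy⟩ | ⟨qy, qy', iy, jy, rfl, rfl, hqy⟩
    -- (E1,E1)
    · rcases lt_trichotomy px py with h | h | h
      · refine hx₂ (memOfLt hdc hy₁ (fKey_lt_bp ?_))
        rw [qbp_u, qbp_pt, ← hpx]; exact h
      · exact hne11 (by rw [h])
      · refine hy₂ (memOfLt hdc hx₁ (fKey_lt_bp ?_))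
        rw [qbp_u, qbp_pt, ← hpy]; exact h
    -- (E1,E2)
    · exact helperA1 hsat hdc hx₂ hlx hy₁ k21
    -- (E1,E3)
    · exact helperA1 hsat hdc hx₂ hlx hy₁ k21
    -- (E1,E4)
    · exact helperA1 hsat hdc hx₂ hlx hy₁ k21
    -- (E2,E1)
    · exact helperA1 hsat hdc hy₂ hly hx₁ (fun h => k12 h.symm)
    -- (E2,E2)
    · rcases lt_trichotomy px py with h | h | h
      · refine hx₂ (memOfLt hdc hy₁ (fKey_lt_bp ?_))
        rw [qbp_u, qbp_pt, ← hpy]; exact h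
      · exact hne22 (by rw [h])
      · refine hy₂ (memOfLt hdc hx₁ (fKey_lt_bp ?_))
        rw [qbp_u, qbp_pt, ← hpx]; exact h
    -- (E2,E3)
    · by_cases hq : qx = qy
      · subst hq
        by_cases hss : sameSide ix iy
        · exact k11 (qg_adj_uu_same (fun h => hne11 (by rw [h])) hss)
        · have hliy : qlow qx iy := by
            by_contra h
            exact hlx ((qlow_opp hss).2 h)
          exact helperOppA hsat hdc hx₁ hlx hy₂ ((qlow_same hssy).1 hliy)
      · exact k11 (qg_adj_uu_ne hq)
    -- (E2,E4)
    · by_cases hq : qx = qy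
      · subst hq
        exact k12 (qg_adj_uu_ne hqy)
      · exact k11 (qg_adj_uu_ne hq)
    -- (E3,E1)
    · exact helperA1 hsat hdc hy₂ hly hx₁ (fun h => k12 h.symm)
    -- (E3,E2)
    · by_cases hq : qx = qy
      · subst hq
        by_cases hss : sameSide ix iy
        · exact k11 (qg_adj_uu_same (fun h => hne11 (by rw [h])) hss)
        · have hlix : qlow qx ix := (qlow_opp hss).2 hly
          exact helperOppA hsat hdc hy₁ hly hx₂ ((qlow_same hssx).1 hlix)
      · exact k11 (qg_adj_uu_ne hq)
    -- (E3,E3)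
    · by_cases hq : qx = qy
      · subst hq
        by_cases hss : sameSide ix iy
        · exact k11 (qg_adj_uu_same (fun h => hne11 (by rw [h])) hss)
        · by_cases hlix : qlow qx ix
          · exact helperOppA hsat hdc hy₁ ((qlow_opp hss).1 hlix) hx₂ ((qlow_same hssx).1 hlix)
          · have hliy : qlow qx iy := by
              by_contra h
              exact hlix ((qlow_opp hss).2 h)
            exact helperOppA hsat hdc hx₁ hlix hy₂ ((qlow_same hssy).1 hliy)
      · exact k11 (qg_adj_uu_ne hq)
    -- (E3,E4)
    · by_cases hq : qx = qy
      · subst hq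
        exact k12 (qg_adj_uu_ne hqy)
      · exact k11 (qg_adj_uu_ne hq)
    -- (E4,E1)
    · exact helperA1 hsat hdc hy₂ hly hx₁ (fun h => k12 h.symm)
    -- (E4,E2)
    · by_cases hq : qy = qx
      · subst hq
        exact k21 (qg_adj_uu_ne (Ne.symm hqx))
      · exact k11 (qg_adj_uu_ne (fun h => hq h.symm))
    -- (E4,E3)
    · by_cases hq : qy = qx
      · subst hq
        exact k21 (qg_adj_uu_ne (Ne.symm hqx))
      · exact k11 (qg_adj_uu_ne (fun h => hq h.symm))
    -- (E4,E4)
    · by_cases hq : qx = qy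
      · subst hq
        exact k12 (qg_adj_uu_ne hqy)
      · exact k11 (qg_adj_uu_ne hq)
  · -- X = Aᶜ
    have k12 : ¬ (quartetGraph P Q).Adj x₁ y₂ :=
      fun h => (hk _ _ (Or.inl rfl) (Or.inr rfl)).2 ⟨h, Or.inr hy₂⟩
    have k21 : ¬ (quartetGraph P Q).Adj x₂ y₁ :=
      fun h => (hk _ _ (Or.inr rfl) (Or.inl rfl)).2 ⟨h, Or.inl hx₂⟩
    have k22 : ¬ (quartetGraph P Q).Adj x₂ y₂ :=
      fun h => (hk _ _ (Or.inr rfl) (Or.inr rfl)).2 ⟨h, Or.inl hx₂⟩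
    rcases edgeShape hdc hax hx₁ hx₂ with
        ⟨px, qx, ix, rfl, rfl, hpx, hlx⟩ | ⟨px, qx, ix, rfl, rfl, hpx, hlx⟩ |
        ⟨qx, ix, jx, rfl, rfl, hijx, hssx⟩ | ⟨qx, qx', ix, jx, rfl, rfl, hqx⟩ <;>
      rcases edgeShape hdc hay hy₁ hy₂ with
        ⟨py, qy, iy, rfl, rfl, hpy, hly⟩ | ⟨py, qy, iy, rfl, rfl, hpy, hly⟩ |
        ⟨qy, iy, jy, rfl, rfl, hijy, hssy⟩ | ⟨qy, qy', iy, jy, rfl, rfl, hqy⟩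
    -- (E1,E1)
    · by_cases hq : qx = qy
      · subst hq
        by_cases hss : sameSide ix iy
        · exact k22 (qg_adj_uu_same (fun h => hne22 (by rw [h])) hss)
        · exact (qlow_opp hss).1 hlx hly
      · exact k22 (qg_adj_uu_ne hq)
    -- (E1,E2)
    · by_cases hq : qx = qy
      · subst hq
        exact helperOppA hsat hdc hy₁ hly hx₂ hlx
      · exact k21 (qg_adj_uu_ne hq)
    -- (E1,E3)
    · by_cases hq : qx = qy
      · subst hq
        by_cases hss : sameSide ix jy
        · exact k22 (qg_adj_uu_same (fun h => hne22 (by rw [h])) hss)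
        · have hniy : ¬ qlow qx iy := fun h => (qlow_opp hss).1 hlx ((qlow_same hssy).1 h)
          exact helperOppA hsat hdc hy₁ hniy hx₂ hlx
      · exact k22 (qg_adj_uu_ne hq)
    -- (E1,E4)
    · by_cases hq : qx = qy'
      · subst hq
        exact k21 (qg_adj_uu_ne (Ne.symm hqy))
      · exact k22 (qg_adj_uu_ne hq)
    -- (E2,E1)
    · by_cases hq : qx = qy
      · subst hq
        exact helperOppA hsat hdc hx₁ hlx hy₂ hly
      · exact k12 (qg_adj_uu_ne hq)
    -- (E2,E2)
    · rcases lt_trichotomy px py with h | h | h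
      · refine hx₂ (memOfLt hdc hy₁ (fKey_lt_bp ?_))
        rw [qbp_u, qbp_pt, ← hpy]; exact h
      · exact hne22 (by rw [h])
      · refine hy₂ (memOfLt hdc hx₁ (fKey_lt_bp ?_))
        rw [qbp_u, qbp_pt, ← hpx]; exact h
    -- (E2,E3)
    · by_cases hq : qx = qy
      · subst hq
        by_cases hss : sameSide ix jy
        · exact k12 (qg_adj_uu_same (fun h => hne12 (by rw [h])) hss)
        · have hljy : qlow qx jy := by
            by_contra h
            exact hlx ((qlow_opp hss).2 h)
          exact helperOppA hsat hdc hx₁ hlx hy₂ hljy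
      · exact k12 (qg_adj_uu_ne hq)
    -- (E2,E4)
    · by_cases hq : qx = qy'
      · subst hq
        by_cases hss : sameSide ix jy
        · exact k12 (qg_adj_uu_same (fun h => hne12 (by rw [h])) hss)
        · have hljy : qlow qx jy := by
            by_contra h
            exact hlx ((qlow_opp hss).2 h)
          exact helperOppA hsat hdc hx₁ hlx hy₂ hljy
      · exact k12 (qg_adj_uu_ne hq)
    -- (E3,E1)
    · by_cases hq : qx = qy
      · subst hq
        by_cases hss : sameSide jx iy
        · exact k22 (qg_adj_uu_same (fun h => hne22 (by rw [h])) hss)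
        · have hnix : ¬ qlow qx ix := fun h => (qlow_opp hss).1 ((qlow_same hssx).1 h) hly
          exact helperOppA hsat hdc hx₁ hnix hy₂ hly
      · exact k22 (qg_adj_uu_ne hq)
    -- (E3,E2)
    · by_cases hq : qx = qy
      · subst hq
        by_cases hss : sameSide jx iy
        · exact k21 (qg_adj_uu_same (fun h => hne21 (by rw [h])) hss)
        · exact helperOppA hsat hdc hy₁ hly hx₂ ((qlow_opp hss).2 hly)
      · exact k21 (qg_adj_uu_ne hq)
    -- (E3,E3)
    · by_cases hq : qx = qy
      · subst hq
        by_cases hss : sameSide jx jy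
        · exact k22 (qg_adj_uu_same (fun h => hne22 (by rw [h])) hss)
        · by_cases hl : qlow qx jx
          · have hniy : ¬ qlow qx iy := fun h => (qlow_opp hss).1 hl ((qlow_same hssy).1 h)
            exact helperOppA hsat hdc hy₁ hniy hx₂ hl
          · have hljy : qlow qx jy := by
              by_contra h
              exact hl ((qlow_opp hss).2 h)
            have hnix : ¬ qlow qx ix := fun h => hl ((qlow_same hssx).1 h)
            exact helperOppA hsat hdc hx₁ hnix hy₂ hljy
      · exact k22 (qg_adj_uu_ne hq)
    -- (E3,E4)
    · by_cases hq : qx = qy'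
      · subst hq
        exact k21 (qg_adj_uu_ne (Ne.symm hqy))
      · exact k22 (qg_adj_uu_ne hq)
    -- (E4,E1)
    · by_cases hq : qx' = qy
      · subst hq
        exact k12 (qg_adj_uu_ne hqx)
      · exact k22 (qg_adj_uu_ne hq)
    -- (E4,E2)
    · by_cases hq : qx' = qy
      · subst hq
        by_cases hss : sameSide jx iy
        · exact k21 (qg_adj_uu_same (fun h => hne21 (by rw [h])) hss)
        · exact helperOppA hsat hdc hy₁ hly hx₂ ((qlow_opp hss).2 hly)
      · exact k21 (qg_adj_uu_ne hq)
    -- (E4,E3)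
    · by_cases hq : qx' = qy
      · subst hq
        exact k12 (qg_adj_uu_ne hqx)
      · exact k21 (qg_adj_uu_ne hq)
    -- (E4,E4)
    · by_cases hq : qx' = qy
      · subst hq
        exact k22 (qg_adj_uu_ne hqy)
      · exact k21 (qg_adj_uu_ne hq)

lemma cutGraph_adj' {V : Type} (G : SimpleGraph V) (B : Set V) {x y : V} :
    (cutGraph G B).Adj x y ↔ G.Adj x y ∧ ((x ∈ B ∧ y ∉ B) ∨ (x ∉ B ∧ y ∈ B)) := Iff.rfl

lemma upper_le_one (hsat : ∀ q ∈ Q, OrdSatisfies (fun a b : P => a ≤ b) q)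
    (hdc : ∀ x ∈ A, ∀ y, fKey y ≤ fKey x → y ∈ A)
    (X : Set (QVert P Q)) (hX : X = A ∨ X = Aᶜ) :
    upperIMN (quartetGraph P Q) X ≤ 1 := by
  apply csSup_le
  · exact ⟨0, ∅, Set.empty_subset _,
      ⟨Set.empty_subset _, fun e he => absurd he (Set.notMem_empty e)⟩, Set.ncard_empty _⟩
  rintro n ⟨M, hMc, hMi, rfl⟩
  have key : ∀ e f : Sym2 (QVert P Q), e ∈ M → f ∈ M → e ≠ f → False := by
    intro e f
    induction e, f using Sym2.inductionOn₂ with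
    | _ a b c d =>
      intro he hf hef
      have H := hMi.2 _ he _ hf hef
      have hk0 : ∀ u v : QVert P Q, (u = a ∨ u = b) → (v = c ∨ v = d) →
          u ≠ v ∧ ¬ ((quartetGraph P Q).Adj u v ∧ (u ∈ X ∨ v ∈ X)) := by
        intro u v hu hv
        exact H u (Sym2.mem_iff.2 hu) v (Sym2.mem_iff.2 hv)
      have hce := hMc he
      have hcf := hMc hf
      rw [SimpleGraph.mem_edgeSet, cutGraph_adj'] at hce hcf
      obtain ⟨hadjab, hcrab⟩ := hce
      obtain ⟨hadjcd, hcrcd⟩ := hcf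
      have hcrab' : (a ∈ A ∧ b ∉ A) ∨ (b ∈ A ∧ a ∉ A) := by
        rcases hX with rfl | rfl
        · tauto
        · simp only [Set.mem_compl_iff, not_not] at hcrab; tauto
      have hcrcd' : (c ∈ A ∧ d ∉ A) ∨ (d ∈ A ∧ c ∉ A) := by
        rcases hX with rfl | rfl
        · tauto
        · simp only [Set.mem_compl_iff, not_not] at hcrcd; tauto
      rcases hcrab' with ⟨h1, h2⟩ | ⟨h1, h2⟩ <;> rcases hcrcd' with ⟨h3, h4⟩ | ⟨h3, h4⟩
      · exact noTwo hsat hdc X hX hadjab hadjcd h1 h2 h3 h4 hk0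
      · exact noTwo hsat hdc X hX hadjab hadjcd.symm h1 h2 h3 h4
          (fun u v hu hv => hk0 u v hu hv.symm)
      · exact noTwo hsat hdc X hX hadjab.symm hadjcd h1 h2 h3 h4
          (fun u v hu hv => hk0 u v hu.symm hv)
      · exact noTwo hsat hdc X hX hadjab.symm hadjcd.symm h1 h2 h3 h4
          (fun u v hu hv => hk0 u v hu.symm hv.symm)
  have hsub : M.Subsingleton := fun e he f hf => by
    by_contra hef
    exact key e f he hf hef
  rcases hsub.eq_empty_or_singleton with h | ⟨x, h⟩ <;> subst h <;> simp

lemma bigOmim_le_one (hsat : ∀ q ∈ Q, OrdSatisfies (fun a b : P => a ≤ b) q)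
    (hdc : ∀ x ∈ A, ∀ y, fKey y ≤ fKey x → y ∈ A) :
    bigOmimValue (quartetGraph P Q) A ≤ 1 :=
  max_le (upper_le_one hsat hdc A (Or.inl rfl)) (upper_le_one hsat hdc Aᶜ (Or.inr rfl))

end Main
end Stmt8Aux

/-- If some linear order on `P` satisfies every quartet of `Q`, then there is a
linear order on the vertex set of `G(P,Q)` all of whose prefix cuts have Omim-value at
most 1. -/
theorem stmt8 {P : Type} [Fintype P] (Q : Finset (Quartet P))
    (le : P → P → Prop) (hle : IsLinearOrder P le)
    (hsat : ∀ q ∈ Q, OrdSatisfies le q) :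
    ∃ le' : QVert P Q → QVert P Q → Prop, IsLinearOrder (QVert P Q) le' ∧
      ∀ A : Set (QVert P Q), A.Nonempty → A ≠ Set.univ →
        (∀ x ∈ A, ∀ y, le' y x → y ∈ A) →
        bigOmimValue (quartetGraph P Q) A ≤ 1 := by
  classical
  letI : IsLinearOrder P le := hle
  letI : LinearOrder P :=
    { le := le
      le_refl := fun a => refl_of le a
      le_trans := fun a b c h1 h2 => trans_of le h1 h2
      le_antisymm := fun a b h1 h2 => antisymm_of le h1 h2
      le_total := fun a b => total_of le a b
      toDecidableLE := Classical.decRel le }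
  refine ⟨fun a b => fKey (P := P) (Q := Q) a ≤ fKey b, ?_, ?_⟩
  · exact
      { refl := fun a => le_refl _
        trans := fun a b c h1 h2 => le_trans h1 h2
        antisymm := fun a b h1 h2 => fKey_inj (le_antisymm h1 h2)
        total := fun a b => le_total _ _ }
  · intro A _ _ hdc
    exact bigOmim_le_one (fun q hq => hsat q hq) hdc
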